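/- arXiv:1909.00664 — 7 statements merged into one kernel-verified Lean document; each statement's English description precedes it below -/
import Mathlib

section
/- Let μ > 0 be real, a an integer, and t an integer with t ≥ s - 1 where s ≥ a+1. Then the nabla fractional Taylor monomial H_μ(t, ρ(s)) = Γ(t-s+1+μ)/(Γ(t-s+1)Γ(μ+1)) is a decreasing function of s: for integers a+1 ≤ s₁ < s₂ ≤ t+1, H_μ(t, s₂-1) < H_μ(t, s₁-1) whenever H_μ(t, s₁-1) > 0. -/
noncomputable def H (μ : ℝ) (t a : ℤ) : ℝ :=
  Real.Gamma ((t : ℝ) - a + μ) / (Real.Gamma ((t : ℝ) - a) * Real.Gamma (μ + 1))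

noncomputable def Hg (μ : ℝ) (n : ℕ) : ℝ :=
  Real.Gamma ((n : ℝ) + μ) / (Real.Gamma (n : ℝ) * Real.Gamma (μ + 1))

lemma Hg_pos (μ : ℝ) (hμ : 0 < μ) (n : ℕ) (hn : 1 ≤ n) : 0 < Hg μ n := by
  have h1 : 0 < Real.Gamma ((n : ℝ) + μ) := Real.Gamma_pos_of_pos (by positivity)
  have h2 : 0 < Real.Gamma (n : ℝ) :=
    Real.Gamma_pos_of_pos (by exact_mod_cast hn)
  have h3 : 0 < Real.Gamma (μ + 1) := Real.Gamma_pos_of_pos (by linarith)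
  exact div_pos h1 (mul_pos h2 h3)

lemma Hg_strictMono (μ : ℝ) (hμ : 0 < μ) : StrictMono (Hg μ) := by
  apply strictMono_nat_of_lt_succ
  intro n
  rcases Nat.eq_zero_or_pos n with rfl | hn
  · have h0 : Hg μ 0 = 0 := by
      simp [Hg, Real.Gamma_zero]
    have h1 : Hg μ 1 = 1 := by
      have hpos : 0 < Real.Gamma (μ + 1) := Real.Gamma_pos_of_pos (by linarith)
      have hcomm : (1 : ℝ) + μ = μ + 1 := by ring
      have : Hg μ 1 = Real.Gamma (μ + 1) / Real.Gamma (μ + 1) := by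
        simp [Hg, Real.Gamma_one, hcomm]
      rw [this, div_self hpos.ne']
    rw [h0, h1]; norm_num
  · have hpos := Hg_pos μ hμ n hn
    have hn' : (1:ℝ) ≤ (n:ℝ) := by exact_mod_cast hn
    have key : Hg μ (n + 1) = Hg μ n * (((n : ℝ) + μ) / n) := by
      have e1 : ((n + 1 : ℕ) : ℝ) + μ = ((n : ℝ) + μ) + 1 := by push_cast; ring
      have e2 : ((n + 1 : ℕ) : ℝ) = (n : ℝ) + 1 := by push_cast; ring
      have g1 : Real.Gamma (((n : ℝ) + μ) + 1) = ((n : ℝ) + μ) * Real.Gamma ((n : ℝ) + μ) :=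
        Real.Gamma_add_one (by positivity)
      have g2 : Real.Gamma ((n : ℝ) + 1) = (n : ℝ) * Real.Gamma (n : ℝ) :=
        Real.Gamma_add_one (by positivity)
      have hΓn : Real.Gamma (n : ℝ) ≠ 0 := (Real.Gamma_pos_of_pos (by linarith)).ne'
      have hΓμ : Real.Gamma (μ + 1) ≠ 0 := (Real.Gamma_pos_of_pos (by linarith)).ne'
      have hnne : (n : ℝ) ≠ 0 := by positivity
      rw [Hg, Hg, e1, e2, g1, g2]
      field_simp
    rw [key]
    have hrat : 1 < ((n : ℝ) + μ) / n := by
      rw [lt_div_iff₀ (by positivity)]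
      linarith
    nlinarith

theorem H_decreasing_in_s (μ : ℝ) (hμ : 0 < μ) (a t s₁ s₂ : ℤ)
    (h1 : a + 1 ≤ s₁) (h12 : s₁ < s₂) (h2 : s₂ ≤ t + 1)
    (hpos : 0 < H μ t (s₁ - 1)) :
    H μ t (s₂ - 1) < H μ t (s₁ - 1) := by
  have key : ∀ s : ℤ, s ≤ t + 1 → H μ t (s - 1) = Hg μ (t - s + 1).toNat := by
    intro s hs
    have hnn : 0 ≤ t - s + 1 := by omega
    have hcast : ((t - s + 1).toNat : ℝ) = (t : ℝ) - s + 1 := by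
      have h := Int.toNat_of_nonneg hnn
      calc ((t - s + 1).toNat : ℝ) = (((t - s + 1).toNat : ℤ) : ℝ) := by push_cast; ring
        _ = (t : ℝ) - s + 1 := by rw [h]; push_cast; ring
    unfold H Hg
    rw [hcast]
    push_cast
    ring_nf
  rw [key s₁ (by omega), key s₂ h2]
  exact Hg_strictMono μ hμ (by omega)
end

section
/- Let -1 < μ < 0 be real and let s, t be integers with t ≥ s. Then H_μ(t, ρ(s)) is an increasing function of s: for integers s₁ < s₂ ≤ t, H_μ(t, s₁ - 1) < H_μ(t, s₂ - 1), where H_μ(t, s-1) = Γ(t-s+1+μ)/(Γ(t-s+1)Γ(μ+1)). -/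
noncomputable def Hf (μ : ℝ) (n : ℕ) : ℝ :=
  Real.Gamma ((n : ℝ) + 1 + μ) / (Real.Gamma ((n : ℝ) + 1) * Real.Gamma (μ + 1))

lemma Hf_pos (μ : ℝ) (hμ1 : -1 < μ) (n : ℕ) : 0 < Hf μ n := by
  have h1 : (0:ℝ) < (n : ℝ) + 1 + μ := by linarith [Nat.cast_nonneg (α := ℝ) n]
  have h2 : (0:ℝ) < (n : ℝ) + 1 := by positivity
  have h3 : (0:ℝ) < μ + 1 := by linarith
  exact div_pos (Real.Gamma_pos_of_pos h1)
    (mul_pos (Real.Gamma_pos_of_pos h2) (Real.Gamma_pos_of_pos h3))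

lemma Hf_step (μ : ℝ) (hμ1 : -1 < μ) (hμ2 : μ < 0) (n : ℕ) :
    Hf μ (n + 1) < Hf μ n := by
  have h1 : (0:ℝ) < (n : ℝ) + 1 + μ := by linarith [Nat.cast_nonneg (α := ℝ) n]
  have h2 : (0:ℝ) < (n : ℝ) + 1 := by positivity
  have g1 : Real.Gamma ((n : ℝ) + 1 + μ + 1) = ((n : ℝ) + 1 + μ) * Real.Gamma ((n : ℝ) + 1 + μ) :=
    Real.Gamma_add_one (ne_of_gt h1)
  have g2 : Real.Gamma ((n : ℝ) + 1 + 1) = ((n : ℝ) + 1) * Real.Gamma ((n : ℝ) + 1) :=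
    Real.Gamma_add_one (ne_of_gt h2)
  have key : Hf μ (n + 1) = Hf μ n * (((n : ℝ) + 1 + μ) / ((n : ℝ) + 1)) := by
    unfold Hf
    push_cast
    rw [show (n : ℝ) + 1 + 1 + μ = (n : ℝ) + 1 + μ + 1 by ring, g1, g2]
    field_simp
  have hfpos := Hf_pos μ hμ1 n
  have hlt : ((n : ℝ) + 1 + μ) / ((n : ℝ) + 1) < 1 := by
    rw [div_lt_one h2]; linarith
  calc Hf μ (n + 1) = Hf μ n * (((n : ℝ) + 1 + μ) / ((n : ℝ) + 1)) := key
    _ < Hf μ n * 1 := by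
        apply mul_lt_mul_of_pos_left hlt hfpos
    _ = Hf μ n := mul_one _

lemma Hf_strictAnti (μ : ℝ) (hμ1 : -1 < μ) (hμ2 : μ < 0) : StrictAnti (Hf μ) :=
  strictAnti_nat_of_succ_lt (fun n => Hf_step μ hμ1 hμ2 n)

theorem H_increasing_in_s (μ : ℝ) (hμ1 : -1 < μ) (hμ2 : μ < 0) (t s₁ s₂ : ℤ)
    (h12 : s₁ < s₂) (h2 : s₂ ≤ t) :
    H μ t (s₁ - 1) < H μ t (s₂ - 1) := by
  have hH : ∀ s : ℤ, s ≤ t → H μ t (s - 1) = Hf μ (t - s).toNat := by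
    intro s hs
    have hcast : ((t - s).toNat : ℝ) = (t : ℝ) - s := by
      have := Int.toNat_of_nonneg (sub_nonneg.mpr hs)
      exact_mod_cast congrArg (Int.cast : ℤ → ℝ) this
    unfold H Hf
    rw [hcast]
    push_cast
    ring_nf
  rw [hH s₁ (le_of_lt (lt_of_lt_of_le h12 h2)), hH s₂ h2]
  apply Hf_strictAnti μ hμ1 hμ2
  have h1 : 0 ≤ t - s₂ := sub_nonneg.mpr h2
  omega
end

section
/- If 0 < ν ≤ μ are reals and t ≥ a are integers, then H_ν(t, a) ≤ H_μ(t, a), where H_μ(t,a) = Γ(t-a+μ)/(Γ(t-a)Γ(μ+1)). -/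
/-! For `t = a + (n + 1)`, the functional equation of `Γ` turns `Γ(t - a + μ) / Γ(μ + 1)` into the
rising factorial `(μ + 1)⁽ⁿ⁾`, so `H μ t a = (μ + 1)⁽ⁿ⁾ / n!`, a product of factors increasing in `μ`. -/

open Polynomial Nat

theorem ascPochhammer_eval_le_eval {S : Type*} [Semiring S] [PartialOrder S]
    [IsStrictOrderedRing S] (n : ℕ) {x y : S} (hx : 0 < x) (hxy : x ≤ y) :
    (ascPochhammer S n).eval x ≤ (ascPochhammer S n).eval y := by
  induction n with
  | zero => simp
  | succ n ih =>
    simp only [ascPochhammer_succ_eval]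
    exact mul_le_mul ih (by gcongr) (by positivity) (ascPochhammer_pos n y (hx.trans_le hxy)).le

theorem Real.Gamma_add_nat {s : ℝ} (hs : ∀ k : ℕ, s ≠ -k) (n : ℕ) :
    Real.Gamma (s + n) = (ascPochhammer ℝ n).eval s * Real.Gamma s := by
  induction n with
  | zero => simp
  | succ n ih =>
    have hsn : s + n ≠ 0 := fun h => hs n (eq_neg_of_add_eq_zero_left h)
    rw [cast_succ, ← add_assoc, Real.Gamma_add_one hsn, ih, ascPochhammer_succ_eval]
    ring

theorem H_add_nat_succ {μ : ℝ} (hμ : -1 < μ) (a : ℤ) (n : ℕ) :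
    H μ (a + (n + 1)) a = (ascPochhammer ℝ n).eval (μ + 1) / n ! := by
  have hμ₁ : ∀ k : ℕ, μ + 1 ≠ -k := fun k h => by linarith [k.cast_nonneg (α := ℝ)]
  have h_num : ((a + (n + 1) : ℤ) : ℝ) - a + μ = μ + 1 + n := by push_cast; ring
  have h_den : ((a + (n + 1) : ℤ) : ℝ) - a = n + 1 := by push_cast; ring
  rw [H, h_num, h_den, Real.Gamma_add_nat hμ₁, Real.Gamma_nat_eq_factorial,
    mul_div_mul_right _ _ (Real.Gamma_pos_of_pos (by linarith)).ne']

theorem H_self (μ : ℝ) (a : ℤ) : H μ a a = 0 := by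
  simp [H]

theorem H_mono_in_order (ν μ : ℝ) (hν : 0 < ν) (hνμ : ν ≤ μ) (a t : ℤ) (ht : a ≤ t) :
    H ν t a ≤ H μ t a := by
  obtain rfl | hat := ht.eq_or_lt
  · simp only [H_self, le_refl]
  obtain ⟨n, rfl⟩ : ∃ n : ℕ, t = a + (n + 1) := ⟨(t - a - 1).toNat, by omega⟩
  rw [H_add_nat_succ (by linarith), H_add_nat_succ (by linarith)]
  gcongr
  exact ascPochhammer_eval_le_eval n (by positivity) (by linarith)
end

section
/- Let μ > 0 be real, and let a, s, t be integers with s ≥ a + 2 and t ≥ s. Then h_μ(t, s) = H_μ(t, s-1)/H_μ(t, a) is strictly increasing in t: h_μ(t+1, s) > h_μ(t, s). Equivalently, the nabla difference ∇h_μ(t,s) = h_μ(t,s) - h_μ(t-1,s) equals μ(s-a-1)·Γ(t-s+μ)Γ(t-a-1)/(Γ(t-s+1)Γ(t-a+μ)) > 0. -/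
/-!
With `x = t - s + 1` and `y = t - a`, the ratio `h_μ(t, s)` is `g x / g y` for `g x = Γ(x + μ) / Γ(x)`,
and `Γ(z + 1) = z Γ(z)` gives `g (x + 1) = (x + μ) / x * g x`. So `h_μ` gets multiplied by
`(x + μ) y / (x (y + μ)) = 1 + μ (y - x) / (x (y + μ))`, which exceeds 1 since `y - x = s - a - 1 > 0`.
-/

open Real

noncomputable def gammaRatio (μ x : ℝ) : ℝ := Gamma (x + μ) / Gamma x

lemma H_eq_gammaRatio (μ : ℝ) (t a : ℤ) : H μ t a = gammaRatio μ (t - a) / Gamma (μ + 1) := by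
  rw [H, gammaRatio, div_div]

lemma H_div_H_eq_gammaRatio_div (μ : ℝ) (hμ : -1 < μ) (t a b : ℤ) :
    H μ t b / H μ t a = gammaRatio μ (t - b) / gammaRatio μ (t - a) := by
  rw [H_eq_gammaRatio, H_eq_gammaRatio,
    div_div_div_cancel_right₀ (Gamma_pos_of_pos (by linarith)).ne']

lemma gammaRatio_add_one {μ x : ℝ} (hx : x ≠ 0) (hxμ : x + μ ≠ 0) :
    gammaRatio μ (x + 1) = (x + μ) / x * gammaRatio μ x := by
  rw [gammaRatio, gammaRatio, add_right_comm, Gamma_add_one hxμ, Gamma_add_one hx,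
    mul_div_mul_comm]

lemma gammaRatio_div_add_one_sub {μ x y : ℝ} (hμ : 0 ≤ μ) (hx : 0 < x) (hy : 0 < y) :
    gammaRatio μ (x + 1) / gammaRatio μ (y + 1) - gammaRatio μ x / gammaRatio μ y =
      μ * (y - x) * (Gamma (x + μ) * Gamma y) / (Gamma (x + 1) * Gamma (y + 1 + μ)) := by
  have hyμ : y + μ ≠ 0 := by positivity
  rw [gammaRatio_add_one hx.ne' (by positivity), gammaRatio_add_one hy.ne' hyμ,
    Gamma_add_one hx.ne', add_right_comm, Gamma_add_one hyμ, gammaRatio, gammaRatio]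
  field_simp
  ring

lemma gammaRatio_div_lt_add_one {μ x y : ℝ} (hμ : 0 < μ) (hx : 0 < x) (hxy : x < y) :
    gammaRatio μ x / gammaRatio μ y < gammaRatio μ (x + 1) / gammaRatio μ (y + 1) := by
  have hy : 0 < y := hx.trans hxy
  rw [← sub_pos, gammaRatio_div_add_one_sub hμ.le hx hy]
  have := sub_pos.mpr hxy
  positivity

theorem h_ratio_increasing (μ : ℝ) (hμ : 0 < μ) (a s t : ℤ)
    (hs : a + 2 ≤ s) (ht : s ≤ t) :
    H μ t (s - 1) / H μ t a < H μ (t + 1) (s - 1) / H μ (t + 1) a ∧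
    H μ (t + 1) (s - 1) / H μ (t + 1) a - H μ t (s - 1) / H μ t a =
      μ * ((s : ℝ) - a - 1) *
        (Real.Gamma ((t : ℝ) + 1 - s + μ) * Real.Gamma ((t : ℝ) + 1 - a - 1)) /
        (Real.Gamma ((t : ℝ) + 1 - s + 1) * Real.Gamma ((t : ℝ) + 1 - a + μ)) := by
  have has : (a : ℝ) + 2 ≤ s := by exact_mod_cast hs
  have hst : (s : ℝ) ≤ t := by exact_mod_cast ht
  have hx : (0 : ℝ) < t - s + 1 := by linarith
  have hy : (0 : ℝ) < t - a := by linarith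
  rw [H_div_H_eq_gammaRatio_div μ (by linarith), H_div_H_eq_gammaRatio_div μ (by linarith)]
  push_cast
  rw [show (t : ℝ) - (s - 1) = t - s + 1 by ring, show (t : ℝ) + 1 - (s - 1) = t - s + 1 + 1 by ring,
    show (t : ℝ) + 1 - a - 1 = t - a by ring, show (t : ℝ) + 1 - a = t - a + 1 by ring,
    show (t : ℝ) + 1 - s = t - s + 1 by ring, show (s : ℝ) - a - 1 = t - a - (t - s + 1) by ring]
  exact ⟨gammaRatio_div_lt_add_one hμ hx (by linarith), gammaRatio_div_add_one_sub hμ.le hx hy⟩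
end

section
/- Let -1 < μ < 0 be real, and let a, s, t be integers with s ≥ a + 2 and t ≥ s + 1. Then h_μ(t, s) = H_μ(t, s-1)/H_μ(t, a) is strictly decreasing in t: h_μ(t, s) < h_μ(t-1, s). -/
lemma H_pos {μ : ℝ} {t a : ℤ} (hμ : -1 < μ) (hta : 0 < (t : ℝ) - a)
    (htaμ : 0 < (t : ℝ) - a + μ) : 0 < H μ t a := by
  have := Real.Gamma_pos_of_pos htaμ
  have := Real.Gamma_pos_of_pos hta
  have := Real.Gamma_pos_of_pos (show 0 < μ + 1 by linarith)
  unfold H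
  positivity

lemma H_eq_mul_H_sub_one (μ : ℝ) (t a : ℤ) (hy : (t : ℝ) - 1 - a ≠ 0)
    (hyμ : (t : ℝ) - 1 - a + μ ≠ 0) :
    H μ t a = ((t - 1 - a + μ) / (t - 1 - a)) * H μ (t - 1) a := by
  unfold H
  push_cast
  rw [show (t : ℝ) - a + μ = ((t : ℝ) - 1 - a + μ) + 1 by ring,
    show (t : ℝ) - a = ((t : ℝ) - 1 - a) + 1 by ring,
    Real.Gamma_add_one hyμ, Real.Gamma_add_one hy]
  generalize (t : ℝ) - 1 - a = y
  ring

lemma add_div_self_lt_add_div_self {μ x b : ℝ} (hμ : μ < 0) (hx : 0 < x) (hxb : x < b) :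
    (x + μ) / x < (b + μ) / b := by
  rw [div_lt_div_iff₀ hx (hx.trans hxb)]
  nlinarith

lemma mul_div_mul_lt_div {p q A B : ℝ} (hp : 0 < p) (hpq : p < q) (hA : 0 < A) (hB : 0 < B) :
    p * A / (q * B) < A / B := by
  rw [mul_div_mul_comm]
  exact mul_lt_of_lt_one_left (div_pos hA hB) ((div_lt_one (hp.trans hpq)).2 hpq)

theorem h_ratio_decreasing (μ : ℝ) (hμ1 : -1 < μ) (hμ2 : μ < 0) (a s t : ℤ)
    (hs : a + 2 ≤ s) (ht : s + 1 ≤ t) :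
    H μ t (s - 1) / H μ t a < H μ (t - 1) (s - 1) / H μ (t - 1) a := by
  have hsa : (a : ℝ) + 2 ≤ s := by exact_mod_cast hs
  have hts : (s : ℝ) + 1 ≤ t := by exact_mod_cast ht
  rw [H_eq_mul_H_sub_one μ t (s - 1) (by push_cast; linarith) (by push_cast; linarith),
    H_eq_mul_H_sub_one μ t a (by linarith) (by linarith)]
  refine mul_div_mul_lt_div ?_ (add_div_self_lt_add_div_self hμ2 ?_ ?_) ?_ ?_
  · apply div_pos <;> push_cast <;> linarith
  · push_cast; linarith
  · push_cast; linarith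
  · apply H_pos hμ1 <;> push_cast <;> linarith
  · apply H_pos hμ1 <;> push_cast <;> linarith
end

section
/- Under the same hypotheses (1 < ν < 2, b ≥ a+1, α, β, γ, δ ≥ 0, β ≥ α, ξ > 0), define v(t,s) = u(t,s) - H_{ν-1}(t, s-1). Then v(t,s) ≥ 0 for all integers t ∈ [a, b] and s ∈ [a+1, b] with t ≥ s. -/
noncomputable def xiBVP (ν : ℝ) (a b : ℤ) (α β γ δ : ℝ) : ℝ :=
  (β - α) * γ + α * γ * H (ν - 1) b a + α * δ * H (ν - 2) b a

noncomputable def uG (ν : ℝ) (a b : ℤ) (α β γ δ : ℝ) (t s : ℤ) : ℝ :=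
  (1 / xiBVP ν a b α β γ δ) *
    (α * γ * H (ν - 1) t a * H (ν - 1) b (s - 1)
      + α * δ * H (ν - 1) t a * H (ν - 2) b (s - 1)
      + (β - α) * γ * H (ν - 1) b (s - 1)
      + (β - α) * δ * H (ν - 2) b (s - 1))

noncomputable def vG (ν : ℝ) (a b : ℤ) (α β γ δ : ℝ) (t s : ℤ) : ℝ :=
  uG ν a b α β γ δ t s - H (ν - 1) t (s - 1)

noncomputable def GG (ν : ℝ) (a b : ℤ) (α β γ δ : ℝ) (t s : ℤ) : ℝ :=
  if t ≤ s - 1 then uG ν a b α β γ δ t s else vG ν a b α β γ δ t s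

/-!
For integers `t = a + 1 + n` the Taylor monomial `H μ t a` equals the product
`∏_{k < n} (1 + μ / (k + 1))`, so it is positive for `μ > -1`, increasing in `n` for `μ ≥ 0`,
decreasing for `μ ≤ 0`, and its ratios `H μ (t + p) a / H μ t a` decrease in `t` for `μ ≥ 0`.
Clearing the denominator `ξ`, the claim `H_{ν-1}(t, s-1) ≤ u(t, s)` splits into four termwise
inequalities, one for each summand of `ξ`, each an instance of these monotonicity properties.
-/

open Finset

noncomputable def taylorProd (μ : ℝ) (n : ℕ) : ℝ := ∏ k ∈ range n, (1 + μ / (k + 1))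

lemma taylorProd_succ (μ : ℝ) (n : ℕ) :
    taylorProd μ (n + 1) = taylorProd μ n * (1 + μ / (n + 1)) := by
  rw [taylorProd, prod_range_succ, taylorProd]

lemma one_add_div_succ_pos {μ : ℝ} (hμ : -1 < μ) (n : ℕ) : 0 < 1 + μ / (n + 1) := by
  have hn : (0 : ℝ) < n + 1 := by positivity
  rw [one_add_div hn.ne']
  exact div_pos (by linarith [n.cast_nonneg (α := ℝ)]) hn

lemma taylorProd_pos {μ : ℝ} (hμ : -1 < μ) (n : ℕ) : 0 < taylorProd μ n :=
  prod_pos fun k _ => one_add_div_succ_pos hμ k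

lemma taylorProd_monotone {μ : ℝ} (hμ : 0 ≤ μ) : Monotone (taylorProd μ) :=
  monotone_nat_of_le_succ fun n => by
    rw [taylorProd_succ]
    exact le_mul_of_one_le_right (taylorProd_pos (by linarith) n).le
      (le_add_of_nonneg_right (by positivity))

lemma taylorProd_antitone {μ : ℝ} (hμ₁ : -1 < μ) (hμ₂ : μ ≤ 0) : Antitone (taylorProd μ) :=
  antitone_nat_of_succ_le fun n => by
    rw [taylorProd_succ]
    exact mul_le_of_le_one_right (taylorProd_pos hμ₁ n).le
      (add_le_of_nonpos_right (div_nonpos_of_nonpos_of_nonneg hμ₂ (by positivity)))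

lemma taylorProd_add_mul_le {μ : ℝ} (hμ : 0 ≤ μ) {m n : ℕ} (hmn : m ≤ n) (p : ℕ) :
    taylorProd μ (n + p) * taylorProd μ m ≤ taylorProd μ (m + p) * taylorProd μ n := by
  induction p with
  | zero => exact (mul_comm _ _).le
  | succ p ih =>
    have hpos := taylorProd_pos (μ := μ) (by linarith)
    have hstep : 1 + μ / ((n + p : ℕ) + 1 : ℝ) ≤ 1 + μ / ((m + p : ℕ) + 1 : ℝ) := by gcongr
    calc taylorProd μ (n + (p + 1)) * taylorProd μ m
        = taylorProd μ (n + p) * taylorProd μ m * (1 + μ / ((n + p : ℕ) + 1 : ℝ)) := by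
          rw [← add_assoc, taylorProd_succ]; ring
      _ ≤ taylorProd μ (m + p) * taylorProd μ n * (1 + μ / ((m + p : ℕ) + 1 : ℝ)) :=
          mul_le_mul ih hstep (one_add_div_succ_pos (by linarith) _).le
            (mul_pos (hpos _) (hpos _)).le
      _ = taylorProd μ (m + (p + 1)) * taylorProd μ n := by
          rw [← add_assoc m, taylorProd_succ]; ring

lemma H_self_add_one {μ : ℝ} (hμ : -1 < μ) (a : ℤ) : H μ (a + 1) a = 1 := by
  have : Real.Gamma (μ + 1) ≠ 0 := (Real.Gamma_pos_of_pos (by linarith)).ne'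
  simp only [H, Int.cast_add, Int.cast_one, add_sub_cancel_left, Real.Gamma_one, one_mul]
  rw [add_comm, div_self this]

lemma H_add_one {μ : ℝ} (hμ : -1 < μ) {a t : ℤ} (hat : a < t) :
    H μ (t + 1) a = H μ t a * (1 + μ / ((t : ℝ) - a)) := by
  have hx : (1 : ℝ) ≤ (t : ℝ) - a := by
    rw [le_sub_iff_add_le']; exact_mod_cast hat
  have hΓx : Real.Gamma ((t : ℝ) - a) ≠ 0 := (Real.Gamma_pos_of_pos (by linarith)).ne'
  have hΓμ : Real.Gamma (μ + 1) ≠ 0 := (Real.Gamma_pos_of_pos (by linarith)).ne'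
  have hcast : ((t + 1 : ℤ) : ℝ) - a = ((t : ℝ) - a) + 1 := by push_cast; ring
  rw [H, H, hcast, add_right_comm, Real.Gamma_add_one (by linarith),
    Real.Gamma_add_one (by linarith)]
  field_simp

lemma H_eq_taylorProd {μ : ℝ} (hμ : -1 < μ) {a t : ℤ} {n : ℕ} (h : t = a + 1 + n) :
    H μ t a = taylorProd μ n := by
  subst h
  induction n with
  | zero => simpa [taylorProd] using H_self_add_one hμ a
  | succ n ih =>
    have hcast : ((a + 1 + n : ℤ) : ℝ) - a = (n : ℝ) + 1 := by push_cast; ring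
    rw [Nat.cast_succ, ← add_assoc, H_add_one hμ (by omega), ih, hcast, taylorProd_succ]

lemma xi_mul_taylorProd_le {ν : ℝ} (hν₁ : 1 < ν) (hν₂ : ν < 2) {α β γ δ : ℝ}
    (hα : 0 ≤ α) (hγ : 0 ≤ γ) (hδ : 0 ≤ δ) (hαβ : α ≤ β) {m n : ℕ} (hmn : m ≤ n) (p : ℕ) :
    ((β - α) * γ + α * γ * taylorProd (ν - 1) (n + p) + α * δ * taylorProd (ν - 2) (n + p))
        * taylorProd (ν - 1) m ≤
      α * γ * taylorProd (ν - 1) (m + p) * taylorProd (ν - 1) n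
        + α * δ * taylorProd (ν - 1) (m + p) * taylorProd (ν - 2) n
        + (β - α) * γ * taylorProd (ν - 1) n + (β - α) * δ * taylorProd (ν - 2) n := by
  have hν₁' : 0 ≤ ν - 1 := by linarith
  have hratio := taylorProd_add_mul_le hν₁' hmn p
  have hdecr : taylorProd (ν - 2) (n + p) * taylorProd (ν - 1) m
      ≤ taylorProd (ν - 1) (m + p) * taylorProd (ν - 2) n := by
    rw [mul_comm]
    exact mul_le_mul (taylorProd_monotone hν₁' (m.le_add_right p))
      (taylorProd_antitone (by linarith) (by linarith) (n.le_add_right p))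
      (taylorProd_pos (by linarith) _).le (taylorProd_pos (by linarith) _).le
  have hincr := taylorProd_monotone hν₁' hmn
  have htail : 0 ≤ (β - α) * δ * taylorProd (ν - 2) n :=
    mul_nonneg (mul_nonneg (by linarith) hδ) (taylorProd_pos (by linarith) _).le
  have hαγ := mul_nonneg hα hγ
  have hαδ := mul_nonneg hα hδ
  have hβαγ : 0 ≤ (β - α) * γ := mul_nonneg (by linarith) hγ
  linarith [mul_le_mul_of_nonneg_left hratio hαγ, mul_le_mul_of_nonneg_left hdecr hαδ,
    mul_le_mul_of_nonneg_left hincr hβαγ]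

theorem v_nonneg_general (ν : ℝ) (hν1 : 1 < ν) (hν2 : ν < 2) (a b : ℤ)
    (α β γ δ : ℝ) (hα : 0 ≤ α) (hγ : 0 ≤ γ) (hδ : 0 ≤ δ)
    (hba : α ≤ β) (hξ : 0 < xiBVP ν a b α β γ δ)
    (t s : ℤ) (htb : t ≤ b) (hsa : a + 1 ≤ s)
    (hts : s ≤ t) :
    0 ≤ vG ν a b α β γ δ t s := by
  obtain ⟨m, ht_s⟩ : ∃ m : ℕ, t = s - 1 + 1 + m := ⟨(t - s).toNat, by omega⟩
  obtain ⟨n, hb_s⟩ : ∃ n : ℕ, b = s - 1 + 1 + n := ⟨(b - s).toNat, by omega⟩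
  obtain ⟨p, hs_a⟩ : ∃ p : ℕ, s - 1 = a + p := ⟨(s - 1 - a).toNat, by omega⟩
  have ht_a : t = a + 1 + ((m + p : ℕ) : ℤ) := by push_cast; omega
  have hb_a : b = a + 1 + ((n + p : ℕ) : ℤ) := by push_cast; omega
  have hμ₁ : (-1 : ℝ) < ν - 1 := by linarith
  have hμ₂ : (-1 : ℝ) < ν - 2 := by linarith
  rw [vG, uG, sub_nonneg, one_div, ← div_eq_inv_mul, le_div_iff₀ hξ, mul_comm, xiBVP,
    H_eq_taylorProd hμ₁ ht_s, H_eq_taylorProd hμ₁ hb_s, H_eq_taylorProd hμ₂ hb_s,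
    H_eq_taylorProd hμ₁ ht_a, H_eq_taylorProd hμ₁ hb_a, H_eq_taylorProd hμ₂ hb_a]
  exact xi_mul_taylorProd_le hν1 hν2 hα hγ hδ hba (by omega) p

theorem v_nonneg (ν : ℝ) (hν1 : 1 < ν) (hν2 : ν < 2) (a b : ℤ) (hab : a + 1 ≤ b)
    (α β γ δ : ℝ) (hα : 0 ≤ α) (hβ : 0 ≤ β) (hγ : 0 ≤ γ) (hδ : 0 ≤ δ)
    (hba : α ≤ β) (hξ : 0 < xiBVP ν a b α β γ δ)
    (t s : ℤ) (hta : a ≤ t) (htb : t ≤ b) (hsa : a + 1 ≤ s) (hsb : s ≤ b)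
    (hts : s ≤ t) :
    0 ≤ vG ν a b α β γ δ t s :=
  v_nonneg_general ν hν1 hν2 a b α β γ δ hα hγ hδ hba hξ t s htb hsa hts
end

section
/- Under the same hypotheses, the Green's function G(t,s) defined by G(t,s) = u(t,s) for t ≤ s-1 and G(t,s) = u(t,s) - H_{ν-1}(t, s-1) for t ≥ s is nonnegative for all integers t ∈ [a,b], s ∈ [a+1,b]. -/
/-- `H μ t a` depends only on `t - a`; this is the one-variable version. -/
noncomputable def fH (μ : ℝ) (n : ℤ) : ℝ :=
  Real.Gamma ((n : ℝ) + μ) / (Real.Gamma (n : ℝ) * Real.Gamma (μ + 1))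

lemma H_eq_fH (μ : ℝ) (t a : ℤ) : H μ t a = fH μ (t - a) := by
  unfold H fH; push_cast; ring_nf

lemma fH_zero_of_nonpos (μ : ℝ) {n : ℤ} (hn : n ≤ 0) : fH μ n = 0 := by
  have : Real.Gamma ((n : ℝ)) = 0 := by
    rw [Real.Gamma_eq_zero_iff]
    have h : (n : ℤ) = -((-n).toNat : ℤ) := by omega
    exact ⟨(-n).toNat, by exact_mod_cast congrArg (fun x : ℤ => (x : ℝ)) h⟩
  simp [fH, this]

lemma fH_pos {μ : ℝ} (hμ : -1 < μ) {n : ℤ} (hn : 1 ≤ n) : 0 < fH μ n := by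
  have h1 : (1 : ℝ) ≤ (n : ℝ) := by exact_mod_cast hn
  apply div_pos (Real.Gamma_pos_of_pos (by linarith))
  exact mul_pos (Real.Gamma_pos_of_pos (by linarith))
    (Real.Gamma_pos_of_pos (by linarith))

lemma fH_nonneg {μ : ℝ} (hμ : -1 < μ) (n : ℤ) : 0 ≤ fH μ n := by
  rcases le_or_gt n 0 with h | h
  · rw [fH_zero_of_nonpos μ h]
  · exact (fH_pos hμ h).le

lemma fH_succ {μ : ℝ} (hμ : -1 < μ) {n : ℤ} (hn : 1 ≤ n) :
    fH μ (n + 1) = fH μ n * (((n : ℝ) + μ) / n) := by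
  have h1 : (1 : ℝ) ≤ (n : ℝ) := by exact_mod_cast hn
  have hn0 : (n : ℝ) ≠ 0 := by linarith
  have hnμ : (n : ℝ) + μ ≠ 0 := by linarith
  have e1 : Real.Gamma ((n : ℝ) + 1 + μ) = ((n : ℝ) + μ) * Real.Gamma ((n : ℝ) + μ) := by
    rw [show (n : ℝ) + 1 + μ = ((n : ℝ) + μ) + 1 by ring, Real.Gamma_add_one hnμ]
  have e2 : Real.Gamma ((n : ℝ) + 1) = (n : ℝ) * Real.Gamma (n : ℝ) :=
    Real.Gamma_add_one hn0
  have hΓn : Real.Gamma (n : ℝ) ≠ 0 := (Real.Gamma_pos_of_pos (by linarith)).ne'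
  have hΓμ : Real.Gamma (μ + 1) ≠ 0 := (Real.Gamma_pos_of_pos (by linarith)).ne'
  unfold fH
  push_cast
  rw [e1, e2]
  field_simp

lemma fH_mono {μ : ℝ} (hμ : 0 < μ) {n : ℤ} (hn : 1 ≤ n) :
    ∀ m : ℤ, n ≤ m → fH μ n ≤ fH μ m := by
  refine Int.le_induction le_rfl ?_
  intro m hnm ih
  · have h1 : (1 : ℝ) ≤ (m : ℝ) := by exact_mod_cast le_trans hn hnm
    rw [fH_succ (by linarith) (le_trans hn hnm)]
    have hr : (1 : ℝ) ≤ ((m : ℝ) + μ) / m := by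
      rw [le_div_iff₀ (by linarith)]; linarith
    calc fH μ n ≤ fH μ m := ih
      _ = fH μ m * 1 := by ring
      _ ≤ fH μ m * (((m : ℝ) + μ) / m) :=
          mul_le_mul_of_nonneg_left hr (fH_nonneg (by linarith) m)

lemma fH_anti {μ : ℝ} (hμ1 : -1 < μ) (hμ2 : μ ≤ 0) {n : ℤ} (hn : 1 ≤ n) :
    ∀ m : ℤ, n ≤ m → fH μ m ≤ fH μ n := by
  refine Int.le_induction le_rfl ?_
  intro m hnm ih
  · have h1 : (1 : ℝ) ≤ (m : ℝ) := by exact_mod_cast le_trans hn hnm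
    rw [fH_succ hμ1 (le_trans hn hnm)]
    have hr : ((m : ℝ) + μ) / m ≤ 1 := by
      rw [div_le_one (by linarith)]; linarith
    calc fH μ m * (((m : ℝ) + μ) / m) ≤ fH μ m * 1 :=
          mul_le_mul_of_nonneg_left hr (fH_nonneg hμ1 m)
      _ = fH μ m := by ring
      _ ≤ fH μ n := ih

lemma fH_cross {μ : ℝ} (hμ : 0 < μ) :
    ∀ d : ℕ, ∀ j J : ℤ, 1 ≤ j → j ≤ J →
      fH μ (J + d) * fH μ j ≤ fH μ (j + d) * fH μ J := by
  intro d
  induction d with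
  | zero => intro j J hj hjJ; simp [mul_comm]
  | succ d ih =>
    intro j J hj hjJ
    have hμ' : (-1 : ℝ) < μ := by linarith
    have hjd : 1 ≤ j + (d : ℤ) := by omega
    have hJd : 1 ≤ J + (d : ℤ) := by omega
    have hjR : (1 : ℝ) ≤ (j : ℝ) + d := by exact_mod_cast hjd
    have hJR : (1 : ℝ) ≤ (J : ℝ) + d := by exact_mod_cast hJd
    have hjJR : (j : ℝ) ≤ (J : ℝ) := by exact_mod_cast hjJ
    have e1 : fH μ (j + (d + 1 : ℕ)) = fH μ (j + d) * ((((j : ℤ) + d : ℤ) : ℝ) + μ) / (((j : ℤ) + d : ℤ) : ℝ) := by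
      push_cast
      rw [show (j : ℤ) + ((d : ℤ) + 1) = (j + d) + 1 by ring, fH_succ hμ' hjd]
      push_cast; ring
    have e2 : fH μ (J + (d + 1 : ℕ)) = fH μ (J + d) * ((((J : ℤ) + d : ℤ) : ℝ) + μ) / (((J : ℤ) + d : ℤ) : ℝ) := by
      push_cast
      rw [show (J : ℤ) + ((d : ℤ) + 1) = (J + d) + 1 by ring, fH_succ hμ' hJd]
      push_cast; ring
    have hratio : (((J : ℝ) + d) + μ) / ((J : ℝ) + d) ≤ (((j : ℝ) + d) + μ) / ((j : ℝ) + d) := by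
      rw [div_le_div_iff₀ (by linarith) (by linarith)]
      nlinarith
    have hnn1 : 0 ≤ fH μ (J + d) * fH μ j :=
      mul_nonneg (fH_nonneg hμ' _) (fH_nonneg hμ' _)
    have hnn2 : 0 ≤ (((j : ℝ) + d) + μ) / ((j : ℝ) + d) :=
      div_nonneg (by linarith) (by linarith)
    have ihd := ih j J hj hjJ
    calc fH μ (J + (d + 1 : ℕ)) * fH μ j
        = (fH μ (J + d) * fH μ j) * ((((J : ℝ) + d) + μ) / ((J : ℝ) + d)) := by
          rw [e2]; push_cast; ring
      _ ≤ (fH μ (J + d) * fH μ j) * ((((j : ℝ) + d) + μ) / ((j : ℝ) + d)) :=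
          mul_le_mul_of_nonneg_left hratio hnn1
      _ ≤ (fH μ (j + d) * fH μ J) * ((((j : ℝ) + d) + μ) / ((j : ℝ) + d)) :=
          mul_le_mul_of_nonneg_right ihd hnn2
      _ = fH μ (j + (d + 1 : ℕ)) * fH μ J := by rw [e1]; push_cast; ring

theorem G_nonneg (ν : ℝ) (hν1 : 1 < ν) (hν2 : ν < 2) (a b : ℤ) (hab : a + 1 ≤ b)
    (α β γ δ : ℝ) (hα : 0 ≤ α) (hβ : 0 ≤ β) (hγ : 0 ≤ γ) (hδ : 0 ≤ δ)
    (hba : α ≤ β) (hξ : 0 < xiBVP ν a b α β γ δ)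
    (t s : ℤ) (hta : a ≤ t) (htb : t ≤ b) (hsa : a + 1 ≤ s) (hsb : s ≤ b) :
    0 ≤ GG ν a b α β γ δ t s := by
  have hμ1 : (0 : ℝ) < ν - 1 := by linarith
  have hμ1' : (-1 : ℝ) < ν - 1 := by linarith
  have hμ2' : (-1 : ℝ) < ν - 2 := by linarith
  have hμ2'' : ν - 2 ≤ 0 := by linarith
  have hβα : 0 ≤ β - α := by linarith
  -- nonnegativity of all H-values that occur
  have hHta : 0 ≤ H (ν - 1) t a := by rw [H_eq_fH]; exact fH_nonneg hμ1' _
  have hHbs1 : 0 ≤ H (ν - 1) b (s - 1) := by rw [H_eq_fH]; exact fH_nonneg hμ1' _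
  have hHbs2 : 0 ≤ H (ν - 2) b (s - 1) := by rw [H_eq_fH]; exact fH_nonneg hμ2' _
  have hEnn : 0 ≤ α * γ * H (ν - 1) t a * H (ν - 1) b (s - 1)
      + α * δ * H (ν - 1) t a * H (ν - 2) b (s - 1)
      + (β - α) * γ * H (ν - 1) b (s - 1)
      + (β - α) * δ * H (ν - 2) b (s - 1) := by positivity
  have huG : 0 ≤ uG ν a b α β γ δ t s := by
    unfold uG
    exact mul_nonneg (by positivity) hEnn
  unfold GG
  split_ifs with h
  · exact huG
  -- now t ≥ s
  have hts : s ≤ t := by omega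
  -- index bounds
  have hj : 1 ≤ t - (s - 1) := by omega
  have hJ : 1 ≤ b - (s - 1) := by omega
  have hjJ : t - (s - 1) ≤ b - (s - 1) := by omega
  have hjk : t - (s - 1) ≤ t - a := by omega
  have hJK : b - (s - 1) ≤ b - a := by omega
  -- the three key inequalities
  have key1 : H (ν - 1) b a * H (ν - 1) t (s - 1)
      ≤ H (ν - 1) t a * H (ν - 1) b (s - 1) := by
    rw [H_eq_fH, H_eq_fH, H_eq_fH, H_eq_fH]
    have hd := fH_cross hμ1 (s - 1 - a).toNat (t - (s - 1)) (b - (s - 1)) hj hjJ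
    have e1 : t - (s - 1) + ((s - 1 - a).toNat : ℤ) = t - a := by omega
    have e2 : b - (s - 1) + ((s - 1 - a).toNat : ℤ) = b - a := by omega
    rw [e1, e2] at hd
    linarith [hd]
  have key2 : H (ν - 2) b a * H (ν - 1) t (s - 1)
      ≤ H (ν - 1) t a * H (ν - 2) b (s - 1) := by
    rw [H_eq_fH, H_eq_fH, H_eq_fH, H_eq_fH]
    calc fH (ν - 2) (b - a) * fH (ν - 1) (t - (s - 1))
        ≤ fH (ν - 2) (b - (s - 1)) * fH (ν - 1) (t - (s - 1)) :=
          mul_le_mul_of_nonneg_right (fH_anti hμ2' hμ2'' hJ _ hJK) (fH_nonneg hμ1' _)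
      _ ≤ fH (ν - 2) (b - (s - 1)) * fH (ν - 1) (t - a) :=
          mul_le_mul_of_nonneg_left (fH_mono hμ1 hj _ hjk) (fH_nonneg hμ2' _)
      _ = fH (ν - 1) (t - a) * fH (ν - 2) (b - (s - 1)) := by ring
  have key3 : H (ν - 1) t (s - 1) ≤ H (ν - 1) b (s - 1) := by
    rw [H_eq_fH, H_eq_fH]
    exact fH_mono hμ1 hj _ hjJ
  -- assemble
  have hξne : xiBVP ν a b α β γ δ ≠ 0 := ne_of_gt hξ
  have hmain : xiBVP ν a b α β γ δ * H (ν - 1) t (s - 1)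
      ≤ α * γ * H (ν - 1) t a * H (ν - 1) b (s - 1)
      + α * δ * H (ν - 1) t a * H (ν - 2) b (s - 1)
      + (β - α) * γ * H (ν - 1) b (s - 1)
      + (β - α) * δ * H (ν - 2) b (s - 1) := by
    unfold xiBVP
    have t1 : α * γ * (H (ν - 1) b a * H (ν - 1) t (s - 1))
        ≤ α * γ * (H (ν - 1) t a * H (ν - 1) b (s - 1)) :=
      mul_le_mul_of_nonneg_left key1 (by positivity)
    have t2 : α * δ * (H (ν - 2) b a * H (ν - 1) t (s - 1))
        ≤ α * δ * (H (ν - 1) t a * H (ν - 2) b (s - 1)) :=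
      mul_le_mul_of_nonneg_left key2 (by positivity)
    have t3 : (β - α) * γ * H (ν - 1) t (s - 1)
        ≤ (β - α) * γ * H (ν - 1) b (s - 1) :=
      mul_le_mul_of_nonneg_left key3 (by positivity)
    have t4 : 0 ≤ (β - α) * δ * H (ν - 2) b (s - 1) := by positivity
    nlinarith [t1, t2, t3, t4]
  have hfin : 0 ≤ vG ν a b α β γ δ t s := by
    unfold vG uG
    rw [sub_nonneg]
    calc H (ν - 1) t (s - 1)
        = (1 / xiBVP ν a b α β γ δ) * (xiBVP ν a b α β γ δ * H (ν - 1) t (s - 1)) := by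
          field_simp
      _ ≤ _ := mul_le_mul_of_nonneg_left hmain (by positivity)
  exact hfin
end
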